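/- The composition product on pairs of series, c_δ ∘ d_δ = ((c_L ∘̃ d_δ) ⧢ d_L, (c_L ∘̃ d_δ) ⧢ d_R + c_R ∘̃ d_δ), is associative. -/

import Mathlib

/-- Formal power series over the alphabet `X = {x₀, x₁}` (encoded as `Bool`,
with `x₀ = false` and `x₁ = true`). -/
abbrev FPS := List Bool → ℝ

/-- The letter `x₀`. -/
def x₀ : Bool := false

/-- The letter `x₁`. -/
def x₁ : Bool := true

/-- Shuffle product of formal power series, via the left-quotient recursion. -/
noncomputable def shuffle : (List Bool → ℝ) → (List Bool → ℝ) → List Bool → ℝ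
  | c, d, [] => c [] * d []
  | c, d, x :: w => shuffle (fun u => c (x :: u)) d w + shuffle c (fun u => d (x :: u)) w

/-- The series `1` (the empty word). -/
noncomputable def oneF : FPS := fun w => match w with | [] => 1 | _ => 0

/-- The series corresponding to a single word. -/
noncomputable def ind (η : List Bool) : FPS := fun w => if w = η then 1 else 0

/-- Left catenation of the series `e` by a letter `x`: the series `x e`. -/
noncomputable def pre (x : Bool) (e : FPS) : FPS :=
  fun w => match w with
  | [] => 0
  | y :: u => if y = x then e u else 0

/-- The word-indexed family of endomorphisms `φ_d`, determined by
`φ_d(x₀)(e) = x₀ e` and `φ_d(x₁)(e) = x₁(d_L ⧢ e) + x₀(d_R ⧢ e)`. -/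
noncomputable def phiW (d : FPS × FPS) : List Bool → FPS → FPS
  | [], e => e
  | x :: η, e =>
      if x then pre x₁ (shuffle d.1 (phiW d η e)) + pre x₀ (shuffle d.2 (phiW d η e))
      else pre x₀ (phiW d η e)

/-- The mixed composition product `c ∘̃ d_δ = Σ_η (c,η) φ_d(η)(1)`.
(For each word `w` only the finitely many `η` with `|η| ≤ |w|` contribute.) -/
noncomputable def mixedComp (c : FPS) (d : FPS × FPS) : FPS :=
  fun w => ∑' η : List Bool, c η * phiW d η oneF w

/-- The composition product on pairs:
`c_δ ∘ d_δ = ((c_L ∘̃ d_δ) ⧢ d_L, (c_L ∘̃ d_δ) ⧢ d_R + c_R ∘̃ d_δ)`. -/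
noncomputable def compD (c d : FPS × FPS) : FPS × FPS :=
  (shuffle (mixedComp c.1 d) d.1,
    shuffle (mixedComp c.1 d) d.2 + mixedComp c.2 d)

/-!
The two components of `compD` are built from the shuffle product, which is commutative,
associative and bilinear, and the mixed composition `c ∘̃ d`. Associativity therefore reduces to
two identities for `∘̃`: it is a shuffle homomorphism in `c`,
`(a ⧢ b) ∘̃ d = (a ∘̃ d) ⧢ (b ∘̃ d)`, and `(c ∘̃ d) ∘̃ e = c ∘̃ (d ∘ e)`. Both follow by induction
on word length from the left-derivative rules
`x₁⁻¹(c ∘̃ d) = d_L ⧢ (x₁⁻¹c ∘̃ d)` and `x₀⁻¹(c ∘̃ d) = x₀⁻¹c ∘̃ d + d_R ⧢ (x₁⁻¹c ∘̃ d)`,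
which come from the defining recursion of `φ_d` after splitting `Σ_η` by the first letter of `η`.
-/

/-- The left quotient `x⁻¹f`. -/
def leftDeriv (x : Bool) (f : FPS) : FPS := fun w => f (x :: w)

section Shuffle

variable (f g h : FPS)

theorem shuffle_apply_nil : shuffle f g [] = f [] * g [] := rfl

theorem shuffle_apply_cons (x : Bool) (w : List Bool) :
    shuffle f g (x :: w) = shuffle (leftDeriv x f) g w + shuffle f (leftDeriv x g) w := rfl

theorem leftDeriv_shuffle (x : Bool) :
    leftDeriv x (shuffle f g) = shuffle (leftDeriv x f) g + shuffle f (leftDeriv x g) := rfl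

theorem shuffle_comm : shuffle f g = shuffle g f := by
  funext w
  induction w generalizing f g with
  | nil => exact mul_comm _ _
  | cons x w ih =>
    rw [shuffle_apply_cons, shuffle_apply_cons, ih (leftDeriv x f), ih f, add_comm]

theorem shuffle_add_right : shuffle f (g + h) = shuffle f g + shuffle f h := by
  funext w
  induction w generalizing f g h with
  | nil => exact mul_add _ _ _
  | cons x w ih =>
    rw [Pi.add_apply, shuffle_apply_cons, shuffle_apply_cons, shuffle_apply_cons]
    change _ + shuffle f (leftDeriv x g + leftDeriv x h) w = _
    rw [ih, ih, Pi.add_apply, Pi.add_apply]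
    ring

theorem shuffle_add_left : shuffle (f + g) h = shuffle f h + shuffle g h := by
  rw [shuffle_comm, shuffle_add_right, shuffle_comm h, shuffle_comm h]

theorem shuffle_smul_right (r : ℝ) : shuffle f (r • g) = r • shuffle f g := by
  funext w
  induction w generalizing f g with
  | nil => exact mul_left_comm _ _ _
  | cons x w ih =>
    simp only [shuffle_apply_cons, Pi.smul_apply, smul_eq_mul]
    rw [ih, show leftDeriv x (r • g) = r • leftDeriv x g from rfl, ih]
    simp only [Pi.smul_apply, smul_eq_mul, mul_add]

theorem shuffle_zero_right : shuffle f 0 = 0 := by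
  simpa using shuffle_smul_right f 0 0

theorem shuffle_zero_left : shuffle 0 f = 0 := by
  rw [shuffle_comm, shuffle_zero_right]

theorem oneF_shuffle : shuffle oneF f = f := by
  funext w
  induction w generalizing f with
  | nil => exact one_mul _
  | cons x w ih =>
    rw [shuffle_apply_cons, show leftDeriv x oneF = 0 from rfl, shuffle_zero_left, ih]
    exact zero_add _

theorem shuffle_assoc : shuffle (shuffle f g) h = shuffle f (shuffle g h) := by
  funext w
  induction w generalizing f g h with
  | nil => exact mul_assoc _ _ _
  | cons x w ih =>
    simp only [shuffle_apply_cons, leftDeriv_shuffle, shuffle_add_left, shuffle_add_right,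
      Pi.add_apply, ih]
    ring

theorem shuffle_left_comm : shuffle f (shuffle g h) = shuffle g (shuffle f h) := by
  rw [← shuffle_assoc, shuffle_comm f, shuffle_assoc]

theorem shuffle_congr {f f' g g' : FPS} (w : List Bool)
    (hf : ∀ u : List Bool, u.length ≤ w.length → f u = f' u)
    (hg : ∀ u : List Bool, u.length ≤ w.length → g u = g' u) :
    shuffle f g w = shuffle f' g' w := by
  induction w generalizing f f' g g' with
  | nil => exact congr_arg₂ _ (hf [] le_rfl) (hg [] le_rfl)
  | cons x w ih =>
    have hf' : ∀ u : List Bool, u.length ≤ w.length → leftDeriv x f u = leftDeriv x f' u :=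
      fun u hu => hf (x :: u) (Nat.succ_le_succ hu)
    have hg' : ∀ u : List Bool, u.length ≤ w.length → leftDeriv x g u = leftDeriv x g' u :=
      fun u hu => hg (x :: u) (Nat.succ_le_succ hu)
    rw [shuffle_apply_cons, shuffle_apply_cons, ih hf' fun u hu => hg u (Nat.le_succ_of_le hu),
      ih (fun u hu => hf u (Nat.le_succ_of_le hu)) hg']

theorem shuffle_sum_right {ι : Type*} (F : ι → FPS) (S : Finset ι) :
    shuffle f (∑ i ∈ S, F i) = ∑ i ∈ S, shuffle f (F i) :=
  map_sum (AddMonoidHom.mk' (shuffle f) (shuffle_add_right f)) F S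

theorem shuffle_tsum_apply {ι : Type*} (F : ι → FPS) (w : List Bool) (S : Finset ι)
    (hS : ∀ i ∉ S, ∀ u : List Bool, u.length ≤ w.length → F i u = 0) :
    shuffle g (fun u => ∑' i, F i u) w = ∑' i, shuffle g (F i) w := by
  have hsum : shuffle g (fun u => ∑' i, F i u) w = shuffle g (∑ i ∈ S, F i) w :=
    shuffle_congr w (fun _ _ => rfl) fun u hu => by
      rw [tsum_eq_sum fun i hi => hS i hi u hu, Finset.sum_apply]
  rw [hsum, shuffle_sum_right, Finset.sum_apply, tsum_eq_sum fun i hi => ?_]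
  rw [shuffle_congr (g' := 0) w (fun _ _ => rfl) (hS i hi), shuffle_zero_right, Pi.zero_apply]

/-- Quantifying over the shuffle context `g` is what lets the induction hypothesis be used
under the shuffles produced by the derivative rules of `∘̃`. -/
theorem eq_of_shuffle_leftDeriv {ι : Type*} {L R : ι → FPS} (hnil : ∀ i, L i [] = R i [])
    (hcons : ∀ w : List Bool, (∀ i g, shuffle g (L i) w = shuffle g (R i) w) →
      ∀ x i g, shuffle g (leftDeriv x (L i)) w = shuffle g (leftDeriv x (R i)) w) :
    L = R := by
  suffices h : ∀ w i g, shuffle g (L i) w = shuffle g (R i) w by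
    funext i w
    simpa only [oneF_shuffle] using h w i oneF
  intro w
  induction w with
  | nil => intro i g; rw [shuffle_apply_nil, shuffle_apply_nil, hnil]
  | cons x w ih => intro i g; rw [shuffle_apply_cons, shuffle_apply_cons, ih, hcons w ih]

end Shuffle

theorem tsum_list_eq_tsum_tsum_cons {α E : Type*} [NormedAddCommGroup E] [CompleteSpace E]
    {G : List α → E} (hG : Summable G) (hnil : G [] = 0) :
    ∑' l, G l = ∑' a, ∑' l, G (a :: l) := by
  have hinj : Function.Injective fun p : α × List α => p.1 :: p.2 := fun p q h => by
    simpa [Prod.ext_iff] using h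
  have hsupp : Function.support G ⊆ Set.range fun p : α × List α => p.1 :: p.2 := by
    rintro (_ | ⟨a, l⟩) hl
    · exact absurd hnil hl
    · exact ⟨(a, l), rfl⟩
  rw [← hinj.tsum_eq hsupp]
  exact (hG.comp_injective hinj).tsum_prod' fun a => hG.comp_injective (List.cons_injective)

section MixedComp

variable (d : FPS × FPS)

theorem phiW_apply_eq_zero_of_length_lt (e : FPS) :
    ∀ (η w : List Bool), w.length < η.length → phiW d η e w = 0
  | x :: _, [], _ => by cases x <;> simp [phiW, pre]
  | x :: η, y :: w, h => by
    have hη : ∀ u : List Bool, u.length ≤ w.length → phiW d η e u = 0 := fun u hu =>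
      phiW_apply_eq_zero_of_length_lt e η u (by simp only [List.length_cons] at h; omega)
    have hshuffle (g : FPS) : shuffle g (phiW d η e) w = 0 := by
      rw [shuffle_congr (g' := 0) w (fun _ _ => rfl) hη, shuffle_zero_right, Pi.zero_apply]
    cases x <;> simp [phiW, pre, hη w le_rfl, hshuffle]

theorem summable_mul_phiW (c e : FPS) (w : List Bool) :
    Summable fun η => c η * phiW d η e w :=
  summable_of_ne_finset_zero (s := (List.finite_length_le Bool w.length).toFinset) fun η hη => by
    rw [phiW_apply_eq_zero_of_length_lt d e η w (by simpa using hη), mul_zero]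

theorem mixedComp_apply_nil (c : FPS) : mixedComp c d [] = c [] := by
  rw [mixedComp, tsum_eq_single []]
  · exact mul_one _
  · intro η hη
    rw [phiW_apply_eq_zero_of_length_lt d oneF η [] (List.length_pos_iff.2 hη), mul_zero]

theorem mixedComp_add (a b : FPS) : mixedComp (a + b) d = mixedComp a d + mixedComp b d := by
  funext w
  simp only [mixedComp, Pi.add_apply, add_mul]
  exact (summable_mul_phiW d a oneF w).tsum_add (summable_mul_phiW d b oneF w)

theorem shuffle_mixedComp_apply (g c : FPS) (w : List Bool) :
    shuffle g (mixedComp c d) w = ∑' η, c η * shuffle g (phiW d η oneF) w := by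
  refine (shuffle_tsum_apply g (fun η => c η • phiW d η oneF) w
    (List.finite_length_le Bool w.length).toFinset fun η hη u hu => ?_).trans ?_
  · have hlen : w.length < η.length := by simpa using hη
    rw [Pi.smul_apply, phiW_apply_eq_zero_of_length_lt d oneF η u (hu.trans_lt hlen), smul_zero]
  · simp only [shuffle_smul_right, Pi.smul_apply, smul_eq_mul]

theorem mixedComp_apply_cons (c : FPS) (x : Bool) (w : List Bool) :
    mixedComp c d (x :: w) = ∑' η, c (false :: η) * phiW d (false :: η) oneF (x :: w)
      + ∑' η, c (true :: η) * phiW d (true :: η) oneF (x :: w) := by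
  rw [mixedComp, tsum_list_eq_tsum_tsum_cons (summable_mul_phiW d c oneF _) (by simp [phiW, oneF]),
    tsum_bool]

theorem leftDeriv_true_mixedComp (c : FPS) :
    leftDeriv true (mixedComp c d) = shuffle d.1 (mixedComp (leftDeriv true c) d) := by
  funext w
  rw [shuffle_mixedComp_apply]
  change mixedComp c d (true :: w) = _
  simp only [mixedComp_apply_cons, phiW, pre, x₀, x₁, Bool.false_eq_true, Bool.true_eq_false,
    ↓reduceIte, mul_zero, tsum_zero, Pi.add_apply, add_zero, zero_add]
  rfl

theorem leftDeriv_false_mixedComp (c : FPS) :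
    leftDeriv false (mixedComp c d) =
      mixedComp (leftDeriv false c) d + shuffle d.2 (mixedComp (leftDeriv true c) d) := by
  funext w
  rw [Pi.add_apply, shuffle_mixedComp_apply]
  change mixedComp c d (false :: w) = _
  simp only [mixedComp_apply_cons, phiW, pre, x₀, x₁, Bool.false_eq_true, ↓reduceIte,
    Pi.add_apply, zero_add]
  rfl

theorem mixedComp_shuffle (a b : FPS) :
    mixedComp (shuffle a b) d = shuffle (mixedComp a d) (mixedComp b d) := by
  refine congr_fun (eq_of_shuffle_leftDeriv
    (L := fun p : FPS × FPS => mixedComp (shuffle p.1 p.2) d)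
    (R := fun p => shuffle (mixedComp p.1 d) (mixedComp p.2 d))
    (fun p => ?_) fun w ih x _ g => ?_) (a, b)
  · simp only [shuffle_apply_nil, mixedComp_apply_nil]
  · simp only [Prod.forall] at ih
    -- once every factor sits in the left argument of the outermost shuffle, `ih` applies
    cases x
    all_goals
      simp only [leftDeriv_shuffle, leftDeriv_false_mixedComp, leftDeriv_true_mixedComp,
        mixedComp_add, shuffle_add_left, shuffle_add_right, Pi.add_apply, ← shuffle_assoc, ih]
      simp only [shuffle_comm, shuffle_left_comm, add_comm, add_left_comm]

end MixedComp

theorem compD_fst (c d : FPS × FPS) : (compD c d).1 = shuffle (mixedComp c.1 d) d.1 := rfl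

theorem compD_snd (c d : FPS × FPS) :
    (compD c d).2 = shuffle (mixedComp c.1 d) d.2 + mixedComp c.2 d := rfl

theorem mixedComp_mixedComp (c : FPS) (d e : FPS × FPS) :
    mixedComp (mixedComp c d) e = mixedComp c (compD d e) := by
  refine congr_fun (eq_of_shuffle_leftDeriv (L := fun c => mixedComp (mixedComp c d) e)
    (R := fun c => mixedComp c (compD d e)) (fun c => ?_) fun w ih x _ g => ?_) c
  · simp only [mixedComp_apply_nil]
  · cases x
    all_goals
      simp only [leftDeriv_false_mixedComp, leftDeriv_true_mixedComp, mixedComp_shuffle,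
        mixedComp_add, compD_fst, compD_snd, shuffle_add_left, shuffle_add_right, Pi.add_apply,
        ← shuffle_assoc, ih]
      simp only [shuffle_comm, shuffle_left_comm, add_comm, add_left_comm]

/-- The composition product on pairs of series is associative. -/
theorem compD_assoc (c d e : FPS × FPS) :
    compD (compD c d) e = compD c (compD d e) := by
  simp only [compD, mixedComp_shuffle, mixedComp_add, mixedComp_mixedComp, shuffle_assoc,
    shuffle_add_right, add_assoc]
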